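/- Assume that the sequence (m_n)_{n∈ℕ} converges weakly to m_∞ on V × W × W (i.e. integrals of every bounded continuous real function converge). Then for every bounded continuous g : W → ℝ, lim_{n→∞} ∫_V (K_n[g](x))² μ(dx) = ∫_V (K_∞[g](x))² μ(dx). -/

import Mathlib

open MeasureTheory ProbabilityTheory Filter
open scoped ProbabilityTheory BoundedContinuousFunction

/-! The integrand `(y, z) ↦ g y * g z` is bounded and continuous on `V × W × W`, and
integrating it against `μ ⊗ₘ (K ×ₖ K)` gives `∫ (K[g])² dμ` by Fubini, since `(K ×ₖ K) x` is the
product measure `K x ⊗ K x`. Weak convergence applied to this one test function is the claim. -/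

section CompProdProd

variable {V W : Type*} [MeasurableSpace V] [MeasurableSpace W] [TopologicalSpace W]
  [OpensMeasurableSpace W] (μ : Measure V) [IsFiniteMeasure μ]
  (κ η : Kernel V W) [IsFiniteKernel κ] [IsFiniteKernel η]

theorem integrable_compProd_prod_mul (g h : W →ᵇ ℝ) :
    Integrable (fun p : V × W × W => g p.2.1 * h p.2.2) (μ ⊗ₘ (κ ×ₖ η)) := by
  refine Integrable.of_bound ?_ (‖g‖ * ‖h‖) (ae_of_all _ fun p => ?_)
  · exact ((g.continuous.measurable.comp (measurable_fst.comp measurable_snd)).mul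
      (h.continuous.measurable.comp (measurable_snd.comp measurable_snd))).aestronglyMeasurable
  · rw [norm_mul]
    exact mul_le_mul (g.norm_coe_le_norm _) (h.norm_coe_le_norm _) (norm_nonneg _) (norm_nonneg _)

theorem integral_compProd_prod_mul (g h : W →ᵇ ℝ) :
    ∫ p, g p.2.1 * h p.2.2 ∂(μ ⊗ₘ (κ ×ₖ η)) = ∫ x, (∫ y, g y ∂κ x) * ∫ z, h z ∂η x ∂μ := by
  rw [Measure.integral_compProd (integrable_compProd_prod_mul μ κ η g h)]
  refine integral_congr_ae (ae_of_all _ fun x => ?_)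
  simp only [Kernel.prod_apply]
  exact integral_prod_mul (fun y => g y) (fun z => h z)

end CompProdProd

theorem stmt_2_general
    {V W : Type*}
    [TopologicalSpace V] [MeasurableSpace V]
    [TopologicalSpace W] [MeasurableSpace W] [BorelSpace W]
    (μ : Measure V) [IsProbabilityMeasure μ]
    (K : ℕ → Kernel V W) (Kinf : Kernel V W)
    [∀ n, IsMarkovKernel (K n)] [IsMarkovKernel Kinf]
    (hconv : ∀ f : BoundedContinuousFunction (V × W × W) ℝ,
      Tendsto (fun n => ∫ p, f p ∂(μ ⊗ₘ ((K n) ×ₖ (K n)))) atTop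
        (nhds (∫ p, f p ∂(μ ⊗ₘ (Kinf ×ₖ Kinf))))) :
    ∀ g : BoundedContinuousFunction W ℝ,
      Tendsto (fun n => ∫ x, (∫ y, g y ∂(K n x)) ^ 2 ∂μ)
        atTop (nhds (∫ x, (∫ y, g y ∂(Kinf x)) ^ 2 ∂μ)) := by
  intro g
  have hsq : ∀ (κ : Kernel V W) [IsFiniteKernel κ],
      ∫ x, (∫ y, g y ∂κ x) ^ 2 ∂μ = ∫ p, g p.2.1 * g p.2.2 ∂(μ ⊗ₘ (κ ×ₖ κ)) := by
    intro κ _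
    rw [integral_compProd_prod_mul]
    simp only [sq]
  simp only [hsq]
  exact hconv (g.compContinuous (ContinuousMap.fst.comp ContinuousMap.snd) *
    g.compContinuous (ContinuousMap.snd.comp ContinuousMap.snd))

/-- if the measures `m_n := μ(dx) K_n(x,dy) K_n(x,dz)` converge weakly to
`m_∞`, then for every bounded continuous `g : W → ℝ` the `L²(μ)` norms converge:
`∫ (K_n[g])² dμ → ∫ (K_∞[g])² dμ`. -/
theorem stmt_2
    {V W : Type*}
    [TopologicalSpace V] [PolishSpace V] [MeasurableSpace V] [BorelSpace V]
    [TopologicalSpace W] [PolishSpace W] [MeasurableSpace W] [BorelSpace W]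
    (μ : Measure V) [IsProbabilityMeasure μ]
    (K : ℕ → Kernel V W) (Kinf : Kernel V W)
    [∀ n, IsMarkovKernel (K n)] [IsMarkovKernel Kinf]
    (hconv : ∀ f : BoundedContinuousFunction (V × W × W) ℝ,
      Tendsto (fun n => ∫ p, f p ∂(μ ⊗ₘ ((K n) ×ₖ (K n)))) atTop
        (nhds (∫ p, f p ∂(μ ⊗ₘ (Kinf ×ₖ Kinf))))) :
    ∀ g : BoundedContinuousFunction W ℝ,
      Tendsto (fun n => ∫ x, (∫ y, g y ∂(K n x)) ^ 2 ∂μ)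
        atTop (nhds (∫ x, (∫ y, g y ∂(Kinf x)) ^ 2 ∂μ)) :=
  stmt_2_general μ K Kinf hconv
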